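/- Let Λ ∈ ℝ^n have pairwise distinct positive entries, φ ∈ ℝ^n, δ̄ ∈ ℝ^{n×n}, and define W ∈ ℝ^{n×n} by W_{i,i} = 0 and, for i ≠ j, W_{i,j} = ( φ_j (Λ_j δ̄_{i,j} + Λ_i δ̄_{j,i}) − φ_i (Λ_i δ̄_{i,j} + Λ_j δ̄_{j,i}) ) / (Λ_j² − Λ_i²). Then W = Γ_S ⊙ 𝓟_S(δ̄) + Γ_A ⊙ 𝓟_A(δ̄), where 𝓟_S(δ̄)_{i,j} = (δ̄_{i,j} + δ̄_{j,i})/2, 𝓟_A(δ̄)_{i,j} = (δ̄_{i,j} − δ̄_{j,i})/2, and for i ≠ j, (Γ_S)_{i,j} = (φ_i − φ_j)/(Λ_i − Λ_j), (Γ_A)_{i,j} = (φ_i + φ_j)/(Λ_i + Λ_j), with zero diagonals. -/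
import Mathlib

open Matrix

theorem W_rearrangement {n : ℕ} (Λ : Fin n → ℝ) (hpos : ∀ i, 0 < Λ i)
    (hdist : ∀ i j : Fin n, i ≠ j → Λ i ≠ Λ j)
    (φ : Fin n → ℝ) (δb : Matrix (Fin n) (Fin n) ℝ) :
    (Matrix.of fun i j =>
        if i = j then (0 : ℝ)
        else (φ j * (Λ j * δb i j + Λ i * δb j i)
            - φ i * (Λ i * δb i j + Λ j * δb j i)) / (Λ j ^ 2 - Λ i ^ 2)) =
      (Matrix.of fun i j =>
        (if i = j then (0 : ℝ) else (φ i - φ j) / (Λ i - Λ j)) * ((δb i j + δb j i) / 2)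
        + (if i = j then (0 : ℝ) else (φ i + φ j) / (Λ i + Λ j))
            * ((δb i j - δb j i) / 2)) := by
  ext i j
  simp only [Matrix.of_apply]
  by_cases h : i = j
  · simp [h]
  · simp only [if_neg h]
    have h1 : Λ i ≠ Λ j := hdist i j h
    have h2 : Λ i - Λ j ≠ 0 := sub_ne_zero.mpr h1
    have h3 : Λ i + Λ j ≠ 0 := by have := hpos i; have := hpos j; linarith
    have h4 : Λ j ^ 2 - Λ i ^ 2 ≠ 0 := by
      intro hc
      apply h2
      have hf : (Λ j - Λ i) * (Λ j + Λ i) = 0 := by nlinarith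
      rcases mul_eq_zero.mp hf with h5 | h5
      · linarith
      · have := hpos i; have := hpos j; linarith
    field_simp
    ring
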